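/- arXiv:1606.05911 — 3 statements merged into one kernel-verified Lean document; each statement's English description precedes it below -/
import Mathlib

section
/- Let Γ ⊆ Aut(X₁,μ₁) × Aut(X₂,μ₂) be a countable group acting diagonally on the product probability space (X₁ × X₂, μ₁ ⊗ μ₂). If the action of Γ on the product has the property (T) relative to the space, then for each i ∈ {1,2}, the action of the projection π_i(Γ) on (X_i, μ_i) has the property (T) relative to the space. -/
/-! Given self-couplings `ν n` of `μ₁` as in the definition of relative property (T), the
couplings `ν n ⊗ (id, id)_* μ₂` of `μ₁ ⊗ μ₂` with itself still have the right marginals,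
still converge to the diagonal (Fubini and dominated convergence), and are still
asymptotically invariant, because push-forwards and products with a fixed probability measure
do not increase total variation distance. Their mass on the diagonal is at most that of
`ν n`, so it tends to `1`. The second factor reduces to the first through the coordinate
swap, since relative property (T) is invariant under measurable isomorphisms. -/

open MeasureTheory Filter Topology

/-- **Ioana's criterion**: the action `act` of `Γ` on the probability space
`(X, μ)` has the property (T) relative to the space (is rigid) if for every
sequence of probability measures `ν n` on `X × X` whose both marginals are `μ`,
which converges weakly to the diagonal pushforward of `μ` (tested against
bounded measurable functions), and which is asymptotically `Γ`-invariant in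
total variation, one has `ν n (diagonal) → 1`. -/
def HasRelPropertyT {Γ X : Type*} [Group Γ] [MeasurableSpace X]
    (μ : Measure X) (act : Γ → X → X) : Prop :=
  ∀ ν : ℕ → Measure (X × X),
    (∀ n, IsProbabilityMeasure (ν n)) →
    (∀ n, (ν n).map Prod.fst = μ) →
    (∀ n, (ν n).map Prod.snd = μ) →
    (∀ φ ψ : X → ℝ, Measurable φ → Measurable ψ →
      (∃ C, ∀ x, |φ x| ≤ C) → (∃ C, ∀ x, |ψ x| ≤ C) →
      Tendsto (fun n => ∫ p : X × X, φ p.1 * ψ p.2 ∂(ν n)) atTop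
        (𝓝 (∫ x, φ x * ψ x ∂μ))) →
    (∀ γ : Γ, Tendsto (fun n => ⨆ s : Set (X × X),
        ((ν n).map (Prod.map (act γ) (act γ)) s - ν n s) +
          (ν n s - (ν n).map (Prod.map (act γ) (act γ)) s)) atTop (𝓝 0)) →
    Tendsto (fun n => ν n {p : X × X | p.1 = p.2}) atTop (𝓝 1)

open scoped ENNReal

namespace MeasureTheory.Measure

variable {X Y : Type*} [MeasurableSpace X] [MeasurableSpace Y]

/-- `(a - b) + (b - a) = |a - b|` in `ℝ≥0∞`; as in `HasRelPropertyT`, `s` ranges over all sets,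
measurable or not. -/
noncomputable def tvDist (ρ ρ' : Measure X) : ℝ≥0∞ :=
  ⨆ s : Set X, (ρ s - ρ' s) + (ρ' s - ρ s)

section tvDist

variable {ρ ρ' : Measure X} {c : ℝ≥0∞}

lemma tsub_le_tvDist (s : Set X) : ρ s - ρ' s ≤ tvDist ρ ρ' :=
  le_self_add.trans (le_iSup (fun s => (ρ s - ρ' s) + (ρ' s - ρ s)) s)

lemma tsub_le_tvDist' (s : Set X) : ρ' s - ρ s ≤ tvDist ρ ρ' :=
  le_add_self.trans (le_iSup (fun s => (ρ s - ρ' s) + (ρ' s - ρ s)) s)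

lemma tsub_le_of_forall_measurableSet (h : ∀ t, MeasurableSet t → ρ t - ρ' t ≤ c)
    (s : Set X) : ρ s - ρ' s ≤ c :=
  calc ρ s - ρ' s ≤ ρ (toMeasurable ρ' s) - ρ' (toMeasurable ρ' s) := by
        rw [measure_toMeasurable]
        exact tsub_le_tsub_right (measure_mono (subset_toMeasurable _ _)) _
    _ ≤ c := h _ (measurableSet_toMeasurable _ _)

lemma tvDist_le_of_forall_measurableSet (h : ∀ t, MeasurableSet t → ρ t - ρ' t ≤ c)
    (h' : ∀ t, MeasurableSet t → ρ' t - ρ t ≤ c) : tvDist ρ ρ' ≤ c :=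
  iSup_le fun s => by
    rcases le_total (ρ s) (ρ' s) with hs | hs
    · rw [tsub_eq_zero_of_le hs, zero_add]
      exact tsub_le_of_forall_measurableSet h' s
    · rw [tsub_eq_zero_of_le hs, add_zero]
      exact tsub_le_of_forall_measurableSet h s

lemma tvDist_map_le {f : X → Y} (hf : Measurable f) :
    tvDist (ρ.map f) (ρ'.map f) ≤ tvDist ρ ρ' := by
  refine tvDist_le_of_forall_measurableSet (fun t ht => ?_) (fun t ht => ?_) <;>
    rw [map_apply hf ht, map_apply hf ht]
  exacts [tsub_le_tvDist _, tsub_le_tvDist' _]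

lemma prod_apply_tsub_prod_apply_le [SFinite ρ] [SFinite ρ'] (η : Measure Y)
    [IsProbabilityMeasure η] (h : ∀ s, ρ s - ρ' s ≤ c) {t : Set (X × Y)}
    (ht : MeasurableSet t) : ρ.prod η t - ρ'.prod η t ≤ c := by
  rw [prod_apply_symm ht, prod_apply_symm ht, tsub_le_iff_left]
  calc ∫⁻ y, ρ ((·, y) ⁻¹' t) ∂η ≤ ∫⁻ y, (ρ' ((·, y) ⁻¹' t) + c) ∂η :=
        lintegral_mono fun y => tsub_le_iff_left.mp (h _)
    _ = (∫⁻ y, ρ' ((·, y) ⁻¹' t) ∂η) + c := by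
        rw [lintegral_add_right _ measurable_const, lintegral_const, measure_univ, mul_one]

lemma tvDist_prod_le [SFinite ρ] [SFinite ρ'] (η : Measure Y) [IsProbabilityMeasure η] :
    tvDist (ρ.prod η) (ρ'.prod η) ≤ tvDist ρ ρ' :=
  tvDist_le_of_forall_measurableSet
    (fun _ => prod_apply_tsub_prod_apply_le η tsub_le_tvDist)
    (fun _ => prod_apply_tsub_prod_apply_le η tsub_le_tvDist')

end tvDist

/-- The product of a self-coupling `ν` of a measure on `X` with the diagonal self-coupling
of `η`, viewed as a self-coupling on `X × Y`. -/
noncomputable def prodDiag (ν : Measure (X × X)) (η : Measure Y) :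
    Measure ((X × Y) × (X × Y)) :=
  (ν.prod η).map fun q => ((q.1.1, q.2), (q.1.2, q.2))

section prodDiag

variable {ν ν' : Measure (X × X)} {η : Measure Y}

instance [IsProbabilityMeasure ν] [IsProbabilityMeasure η] :
    IsProbabilityMeasure (ν.prodDiag η) :=
  isProbabilityMeasure_map (by fun_prop)

lemma tvDist_prodDiag_le [SFinite ν] [SFinite ν'] [IsProbabilityMeasure η] :
    tvDist (ν.prodDiag η) (ν'.prodDiag η) ≤ tvDist ν ν' :=
  (tvDist_map_le (by fun_prop)).trans (tvDist_prod_le η)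

lemma prodDiag_diagonal_le [IsProbabilityMeasure η] :
    ν.prodDiag η (Set.diagonal (X × Y)) ≤ ν (Set.diagonal X) := by
  have hproj : (ν.prodDiag η).map (fun p => (p.1.1, p.2.1)) = ν := by
    rw [prodDiag, map_map (by fun_prop) (by fun_prop)]
    change (ν.prod η).map Prod.fst = ν
    rw [map_fst_prod, measure_univ, one_smul]
  calc ν.prodDiag η (Set.diagonal (X × Y))
      ≤ ν.prodDiag η ((fun p => (p.1.1, p.2.1)) ⁻¹' Set.diagonal X) :=
        measure_mono fun p hp => congrArg Prod.fst hp
    _ ≤ ν (Set.diagonal X) := by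
        conv_rhs => rw [← hproj]
        exact le_map_apply (by fun_prop) _

variable [SFinite ν] [SFinite η]

lemma map_fst_prodDiag : (ν.prodDiag η).map Prod.fst = (ν.map Prod.fst).prod η := by
  rw [prodDiag, map_map measurable_fst (by fun_prop), ← map_id (μ := η),
    map_prod_map _ _ measurable_fst measurable_id, map_id]
  rfl

lemma map_snd_prodDiag : (ν.prodDiag η).map Prod.snd = (ν.map Prod.snd).prod η := by
  rw [prodDiag, map_map measurable_snd (by fun_prop), ← map_id (μ := η),
    map_prod_map _ _ measurable_snd measurable_id, map_id]
  rfl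

lemma map_prodMap_prodDiag {a : X → X} {b : Y → Y} (ha : Measurable a) (hb : Measurable b) :
    (ν.prodDiag η).map (Prod.map (Prod.map a b) (Prod.map a b)) =
      (ν.map (Prod.map a a)).prodDiag (η.map b) := by
  rw [prodDiag, prodDiag, map_map (by fun_prop) (by fun_prop),
    map_prod_map _ _ (ha.prodMap ha) hb, map_map (by fun_prop) (by fun_prop)]
  rfl

end prodDiag

end MeasureTheory.Measure

open MeasureTheory.Measure

section ConvergesToDiagonal

variable {X Y : Type*} [MeasurableSpace X] [MeasurableSpace Y]

/-- The weak-convergence hypothesis of `HasRelPropertyT`. -/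
def ConvergesToDiagonal (ν : ℕ → Measure (X × X)) (μ : Measure X) : Prop :=
  ∀ φ ψ : X → ℝ, Measurable φ → Measurable ψ →
    (∃ C, ∀ x, |φ x| ≤ C) → (∃ C, ∀ x, |ψ x| ≤ C) →
    Tendsto (fun n => ∫ p : X × X, φ p.1 * ψ p.2 ∂(ν n)) atTop (𝓝 (∫ x, φ x * ψ x ∂μ))

lemma ConvergesToDiagonal.map {ν : ℕ → Measure (Y × Y)} {μ : Measure Y}
    (h : ConvergesToDiagonal ν μ) {f : Y → X} (hf : Measurable f) :
    ConvergesToDiagonal (fun n => (ν n).map (Prod.map f f)) (μ.map f) := by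
  rintro φ ψ hφ hψ ⟨C, hC⟩ ⟨D, hD⟩
  have hlhs (n : ℕ) : ∫ p, φ p.1 * ψ p.2 ∂(ν n).map (Prod.map f f) =
      ∫ p, φ (f p.1) * ψ (f p.2) ∂ν n :=
    integral_map (by fun_prop) (by fun_prop)
  have hrhs : ∫ x, φ x * ψ x ∂μ.map f = ∫ y, φ (f y) * ψ (f y) ∂μ :=
    integral_map (by fun_prop) (by fun_prop)
  simp only [hlhs, hrhs]
  exact h (φ ∘ f) (ψ ∘ f) (hφ.comp hf) (hψ.comp hf) ⟨C, fun _ => hC _⟩ ⟨D, fun _ => hD _⟩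

lemma ConvergesToDiagonal.prodDiag {ν : ℕ → Measure (X × X)} [∀ n, IsProbabilityMeasure (ν n)]
    {μ : Measure X} [IsFiniteMeasure μ] (h : ConvergesToDiagonal ν μ)
    (η : Measure Y) [IsFiniteMeasure η] :
    ConvergesToDiagonal (fun n => (ν n).prodDiag η) (μ.prod η) := by
  rintro φ ψ hφ hψ ⟨C, hC⟩ ⟨D, hD⟩
  have hbound (p q : X × Y) : ‖φ p * ψ q‖ ≤ C * D := by
    rw [norm_mul]
    exact mul_le_mul (hC p) (hD q) (norm_nonneg _) ((abs_nonneg _).trans (hC p))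
  have hF : Measurable fun q : (X × X) × Y => φ (q.1.1, q.2) * ψ (q.1.2, q.2) := by fun_prop
  have hlhs (n : ℕ) : ∫ p, φ p.1 * ψ p.2 ∂(ν n).prodDiag η =
      ∫ y, ∫ w, φ (w.1, y) * ψ (w.2, y) ∂ν n ∂η := by
    rw [Measure.prodDiag, integral_map (by fun_prop) (by fun_prop)]
    exact integral_prod_symm _
      (.of_bound hF.aestronglyMeasurable (C * D) (ae_of_all _ fun _ => hbound _ _))
  have hrhs : ∫ p, φ p * ψ p ∂μ.prod η = ∫ y, ∫ x, φ (x, y) * ψ (x, y) ∂μ ∂η :=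
    integral_prod_symm _
      (.of_bound (hφ.mul hψ).aestronglyMeasurable (C * D) (ae_of_all _ fun _ => hbound _ _))
  simp_rw [hlhs, hrhs]
  refine tendsto_integral_of_dominated_convergence (μ := η) (fun _ => C * D)
    (fun n => hF.stronglyMeasurable.integral_prod_left'.aestronglyMeasurable)
    (integrable_const _) (fun n => ae_of_all _ fun y => ?_)
    (ae_of_all _ fun y => h _ _ (by fun_prop) (by fun_prop) ⟨C, fun _ => hC _⟩ ⟨D, fun _ => hD _⟩)
  simpa using norm_integral_le_of_norm_le_const (μ := ν n)
    (ae_of_all _ fun w => hbound (w.1, y) (w.2, y))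

end ConvergesToDiagonal

namespace HasRelPropertyT

variable {Γ X Y : Type*} [Group Γ] [MeasurableSpace X] [MeasurableSpace Y]

theorem map_measurableEquiv {μ : Measure X} {a : Γ → X → X} {b : Γ → Y → Y} (e : X ≃ᵐ Y)
    (he : ∀ γ x, e (a γ x) = b γ (e x)) (hb : ∀ γ, Measurable (b γ))
    (h : HasRelPropertyT μ a) : HasRelPropertyT (μ.map e) b := by
  intro ν hprob hfst hsnd hconv hinv
  set e₂ : Y × Y ≃ᵐ X × X := e.symm.prodCongr e.symm
  have ha (γ : Γ) : a γ = e.symm ∘ b γ ∘ e := funext fun x => by simp [← he]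
  have hmarg {π : X × X → X} {π' : Y × Y → Y} (hπ : Measurable π) (hπ' : Measurable π')
      (hcomm : π ∘ e₂ = e.symm ∘ π') (n : ℕ) (hν : (ν n).map π' = μ.map e) :
      ((ν n).map e₂).map π = μ := by
    rw [map_map hπ e₂.measurable, hcomm, ← map_map e.symm.measurable hπ', hν, e.map_symm_map]
  have hconv' := ConvergesToDiagonal.map hconv e.symm.measurable
  rw [e.map_symm_map] at hconv'
  have htv (γ : Γ) (n : ℕ) : tvDist (((ν n).map e₂).map (Prod.map (a γ) (a γ))) ((ν n).map e₂) ≤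
      tvDist ((ν n).map (Prod.map (b γ) (b γ))) (ν n) := by
    have hcomm : Prod.map (a γ) (a γ) ∘ e₂ = e₂ ∘ Prod.map (b γ) (b γ) := by
      funext ⟨y, y'⟩; simp [e₂, ha, MeasurableEquiv.prodCongr]
    rw [map_map (by rw [ha]; fun_prop) e₂.measurable, hcomm,
      ← map_map e₂.measurable (by fun_prop)]
    exact tvDist_map_le e₂.measurable
  have hdiag (n : ℕ) : (ν n).map e₂ (Set.diagonal X) = ν n (Set.diagonal Y) := by
    rw [e₂.map_apply]
    congr 1
    ext ⟨y, y'⟩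
    simp [e₂, MeasurableEquiv.prodCongr]
  have hmain := h (fun n => (ν n).map e₂) (fun n => isProbabilityMeasure_map (by fun_prop))
    (fun n => hmarg measurable_fst measurable_fst rfl n (hfst n))
    (fun n => hmarg measurable_snd measurable_snd rfl n (hsnd n)) hconv'
    (fun γ => tendsto_of_tendsto_of_tendsto_of_le_of_le tendsto_const_nhds (hinv γ)
      (fun _ => zero_le) (htv γ))
  exact (tendsto_congr hdiag).mp hmain

theorem prod_comm {μ : Measure X} {η : Measure Y} [SFinite μ] [SFinite η]
    {a : Γ → X → X} {b : Γ → Y → Y} (ha : ∀ γ, Measurable (a γ)) (hb : ∀ γ, Measurable (b γ))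
    (h : HasRelPropertyT (μ.prod η) fun γ p => (a γ p.1, b γ p.2)) :
    HasRelPropertyT (η.prod μ) fun γ p => (b γ p.1, a γ p.2) := by
  have := h.map_measurableEquiv (b := fun γ p => (b γ p.1, a γ p.2)) MeasurableEquiv.prodComm
    (fun _ _ => rfl) fun γ => (hb γ).prodMap (ha γ)
  rw [← prod_swap]
  exact this

theorem left_of_prod {μ : Measure X} {η : Measure Y} [IsFiniteMeasure μ]
    [IsProbabilityMeasure η] {a : Γ → X → X} {b : Γ → Y → Y} (ha : ∀ γ, Measurable (a γ))
    (hb : ∀ γ, MeasurePreserving (b γ) η η)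
    (h : HasRelPropertyT (μ.prod η) fun γ p => (a γ p.1, b γ p.2)) :
    HasRelPropertyT μ a := by
  intro ν hprob hfst hsnd hconv hinv
  have htv (γ : Γ) (n : ℕ) : tvDist (((ν n).prodDiag η).map
      (Prod.map (Prod.map (a γ) (b γ)) (Prod.map (a γ) (b γ)))) ((ν n).prodDiag η) ≤
      tvDist ((ν n).map (Prod.map (a γ) (a γ))) (ν n) := by
    rw [map_prodMap_prodDiag (ha γ) (hb γ).measurable, (hb γ).map_eq]
    exact tvDist_prodDiag_le
  have hmain := h (fun n => (ν n).prodDiag η) (fun n => inferInstance)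
    (fun n => by rw [map_fst_prodDiag, hfst]) (fun n => by rw [map_snd_prodDiag, hsnd])
    (ConvergesToDiagonal.prodDiag hconv η)
    (fun γ => tendsto_of_tendsto_of_tendsto_of_le_of_le tendsto_const_nhds (hinv γ)
      (fun _ => zero_le) (htv γ))
  exact tendsto_of_tendsto_of_tendsto_of_le_of_le hmain tendsto_const_nhds
    (fun _ => prodDiag_diagonal_le) (fun _ => prob_le_one)

theorem right_of_prod {μ : Measure X} {η : Measure Y} [IsProbabilityMeasure μ]
    [IsFiniteMeasure η] {a : Γ → X → X} {b : Γ → Y → Y} (ha : ∀ γ, MeasurePreserving (a γ) μ μ)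
    (hb : ∀ γ, Measurable (b γ))
    (h : HasRelPropertyT (μ.prod η) fun γ p => (a γ p.1, b γ p.2)) :
    HasRelPropertyT η b :=
  (h.prod_comm (fun γ => (ha γ).measurable) hb).left_of_prod hb ha

end HasRelPropertyT

theorem relPropertyT_factors_of_prod_general {Γ X₁ X₂ : Type*} [Group Γ]
    [MeasurableSpace X₁] [MeasurableSpace X₂]
    (μ₁ : Measure X₁) (μ₂ : Measure X₂)
    [IsProbabilityMeasure μ₁] [IsProbabilityMeasure μ₂]
    (act₁ : Γ → X₁ → X₁) (act₂ : Γ → X₂ → X₂)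
    (hmp₁ : ∀ γ, MeasurePreserving (act₁ γ) μ₁ μ₁)
    (hmp₂ : ∀ γ, MeasurePreserving (act₂ γ) μ₂ μ₂)
    (h : HasRelPropertyT (μ₁.prod μ₂)
      (fun γ (p : X₁ × X₂) => (act₁ γ p.1, act₂ γ p.2))) :
    HasRelPropertyT μ₁ act₁ ∧ HasRelPropertyT μ₂ act₂ :=
  ⟨h.left_of_prod (fun γ => (hmp₁ γ).measurable) hmp₂,
    h.right_of_prod hmp₁ fun γ => (hmp₂ γ).measurable⟩

/-- If the diagonal action of `Γ ⊆ Aut(X₁,μ₁) × Aut(X₂,μ₂)` on the product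
probability space has the property (T) relative to the space, then so do the
actions of the two projections of `Γ` on each factor. -/
theorem relPropertyT_factors_of_prod {Γ X₁ X₂ : Type*} [Group Γ]
    [MeasurableSpace X₁] [MeasurableSpace X₂]
    (μ₁ : Measure X₁) (μ₂ : Measure X₂)
    [IsProbabilityMeasure μ₁] [IsProbabilityMeasure μ₂]
    (act₁ : Γ → X₁ → X₁) (act₂ : Γ → X₂ → X₂)
    (hone₁ : ∀ x, act₁ 1 x = x) (hmul₁ : ∀ γ γ' x, act₁ (γ * γ') x = act₁ γ (act₁ γ' x))
    (hone₂ : ∀ x, act₂ 1 x = x) (hmul₂ : ∀ γ γ' x, act₂ (γ * γ') x = act₂ γ (act₂ γ' x))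
    (hmp₁ : ∀ γ, MeasurePreserving (act₁ γ) μ₁ μ₁)
    (hmp₂ : ∀ γ, MeasurePreserving (act₂ γ) μ₂ μ₂)
    (h : HasRelPropertyT (μ₁.prod μ₂)
      (fun γ (p : X₁ × X₂) => (act₁ γ p.1, act₂ γ p.2))) :
    HasRelPropertyT μ₁ act₁ ∧ HasRelPropertyT μ₂ act₂ :=
  relPropertyT_factors_of_prod_general μ₁ μ₂ act₁ act₂ hmp₁ hmp₂ h
end

section
/- Let Γ ⊆ Aut(X₁,μ₁) × Aut(X₂,μ₂) be a countable group. If for i = 1, 2 the actions of the projections π_i(Γ) on (X_i, μ_i) have the property (T) relative to the space, then the diagonal action of Γ on (X₁ × X₂, μ₁ ⊗ μ₂) has the property (T) relative to the space. -/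
/-! Push a sequence `ν n` as in `HasRelPropertyT` on `(X₁ × X₂)²` forward to `X₁²` and `X₂²`:
the images are such sequences for the factors (pushing forward does not increase total variation),
so they concentrate on the diagonals. The diagonal of `X₁ × X₂` is the intersection of the
pull-backs of the two diagonals, and `ν (A ∩ B) ≥ ν A + ν B - 1`. The diagonals need not be
measurable, so this inequality is applied to the measurable pseudo-diagonals of countable families
of measurable sets: a measurable subset of a product depends only on countably many measurable
rectangles, so a measurable hull of the diagonal of `X₁ × X₂` contains such an intersection. -/

open MeasureTheory Filter Topology

open Set
open scoped ENNReal

section PseudoDiagonal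

variable {α β : Type*}

def pseudoDiagonal (𝒜 : Set (Set α)) : Set (α × α) :=
  {p | ∀ a ∈ 𝒜, p.1 ∈ a ↔ p.2 ∈ a}

@[simp]
lemma mem_pseudoDiagonal {𝒜 : Set (Set α)} {x y : α} :
    (x, y) ∈ pseudoDiagonal 𝒜 ↔ ∀ a ∈ 𝒜, x ∈ a ↔ y ∈ a :=
  Iff.rfl

lemma diagonal_subset_pseudoDiagonal (𝒜 : Set (Set α)) : diagonal α ⊆ pseudoDiagonal 𝒜 := by
  rintro ⟨x, y⟩ (rfl : x = y) a _
  rfl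

lemma pseudoDiagonal_anti {𝒜 ℬ : Set (Set α)} (h : 𝒜 ⊆ ℬ) :
    pseudoDiagonal ℬ ⊆ pseudoDiagonal 𝒜 :=
  fun _ hp a ha => hp a (h ha)

lemma measurableSet_pseudoDiagonal [MeasurableSpace α] {𝒜 : Set (Set α)} (h𝒜 : 𝒜.Countable)
    (h𝒜m : ∀ a ∈ 𝒜, MeasurableSet a) : MeasurableSet (pseudoDiagonal 𝒜) := by
  have : pseudoDiagonal 𝒜 = ⋂ a ∈ 𝒜, (a ×ˢ a) ∪ (aᶜ ×ˢ aᶜ) := by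
    ext ⟨x, y⟩
    simp only [mem_pseudoDiagonal, mem_iInter, mem_union, mem_prod, mem_compl_iff]
    exact forall₂_congr fun a _ => by tauto
  rw [this]
  exact .biInter h𝒜 fun a ha => ((h𝒜m a ha).prod (h𝒜m a ha)).union
    ((h𝒜m a ha).compl.prod (h𝒜m a ha).compl)

variable [MeasurableSpace α] [MeasurableSpace β]

lemma MeasurableSet.exists_countable_pseudoDiagonal_prod_invariant {s : Set (α × β)}
    (hs : MeasurableSet s) :
    ∃ 𝒜 ⊆ {a : Set α | MeasurableSet a}, 𝒜.Countable ∧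
      ∃ ℬ ⊆ {b : Set β | MeasurableSet b}, ℬ.Countable ∧
        ∀ x x' y y', (x, x') ∈ pseudoDiagonal 𝒜 → (y, y') ∈ pseudoDiagonal ℬ →
          ((x, y) ∈ s ↔ (x', y') ∈ s) := by
  rw [← generateFrom_prod] at hs
  induction s, hs using MeasurableSpace.generateFrom_induction with
  | hC t ht =>
    obtain ⟨a, ha, b, hb, rfl⟩ := ht
    refine ⟨{a}, by simpa using ha, countable_singleton a, {b}, by simpa using hb,
      countable_singleton b, fun x x' y y' hx hy => ?_⟩
    simp only [mem_prod, hx a rfl, hy b rfl]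
  | empty =>
    exact ⟨∅, empty_subset _, countable_empty, ∅, empty_subset _, countable_empty,
      fun _ _ _ _ _ _ => Iff.rfl⟩
  | compl t _ ih =>
    obtain ⟨𝒜, h𝒜m, h𝒜, ℬ, hℬm, hℬ, hinv⟩ := ih
    exact ⟨𝒜, h𝒜m, h𝒜, ℬ, hℬm, hℬ, fun x x' y y' hx hy => (hinv x x' y y' hx hy).not⟩
  | iUnion t _ ih =>
    choose 𝒜 h𝒜m h𝒜 ℬ hℬm hℬ hinv using ih
    refine ⟨⋃ n, 𝒜 n, iUnion_subset h𝒜m, countable_iUnion h𝒜, ⋃ n, ℬ n, iUnion_subset hℬm,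
      countable_iUnion hℬ, fun x x' y y' hx hy => ?_⟩
    simp only [mem_iUnion]
    exact exists_congr fun n => hinv n x x' y y'
      (pseudoDiagonal_anti (subset_iUnion 𝒜 n) hx) (pseudoDiagonal_anti (subset_iUnion ℬ n) hy)

lemma MeasurableSet.exists_countable_pseudoDiagonal_subset {t : Set (α × α)}
    (ht : MeasurableSet t) (hdiag : diagonal α ⊆ t) :
    ∃ 𝒞 ⊆ {c : Set α | MeasurableSet c}, 𝒞.Countable ∧ pseudoDiagonal 𝒞 ⊆ t := by
  obtain ⟨𝒜, h𝒜m, h𝒜, ℬ, hℬm, hℬ, hinv⟩ := ht.exists_countable_pseudoDiagonal_prod_invariant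
  refine ⟨𝒜 ∪ ℬ, union_subset h𝒜m hℬm, h𝒜.union hℬ, fun ⟨x, y⟩ hxy => ?_⟩
  exact (hinv x x x y (diagonal_subset_pseudoDiagonal 𝒜 rfl)
    (pseudoDiagonal_anti subset_union_right hxy)).1 (hdiag rfl)

end PseudoDiagonal

section ProductDiagonal

variable {X₁ X₂ : Type*} [MeasurableSpace X₁] [MeasurableSpace X₂]

lemma MeasurableSet.exists_pseudoDiagonal_prodMap_subset
    {t : Set ((X₁ × X₂) × (X₁ × X₂))} (ht : MeasurableSet t) (hdiag : diagonal (X₁ × X₂) ⊆ t) :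
    ∃ 𝒜 ⊆ {a : Set X₁ | MeasurableSet a}, 𝒜.Countable ∧
      ∃ ℬ ⊆ {b : Set X₂ | MeasurableSet b}, ℬ.Countable ∧
        Prod.map Prod.fst Prod.fst ⁻¹' pseudoDiagonal 𝒜 ∩
          Prod.map Prod.snd Prod.snd ⁻¹' pseudoDiagonal ℬ ⊆ t := by
  obtain ⟨𝒞, h𝒞m, h𝒞, hsub⟩ := ht.exists_countable_pseudoDiagonal_subset hdiag
  have := h𝒞.to_subtype
  choose 𝒜 h𝒜m h𝒜 ℬ hℬm hℬ hinv using fun c : 𝒞 =>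
    (h𝒞m c.2).exists_countable_pseudoDiagonal_prod_invariant
  refine ⟨⋃ c, 𝒜 c, iUnion_subset h𝒜m, countable_iUnion h𝒜, ⋃ c, ℬ c, iUnion_subset hℬm,
    countable_iUnion hℬ, fun ⟨⟨x₁, x₂⟩, ⟨y₁, y₂⟩⟩ ⟨hx, hy⟩ => hsub fun c hc => ?_⟩
  exact hinv ⟨c, hc⟩ x₁ y₁ x₂ y₂ (pseudoDiagonal_anti (subset_iUnion 𝒜 _) hx)
    (pseudoDiagonal_anti (subset_iUnion ℬ _) hy)

lemma map_apply_diagonal_add_map_apply_diagonal_le (ν : Measure ((X₁ × X₂) × (X₁ × X₂))) :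
    ν.map (Prod.map Prod.fst Prod.fst) (diagonal X₁) +
        ν.map (Prod.map Prod.snd Prod.snd) (diagonal X₂) ≤
      ν (diagonal (X₁ × X₂)) + ν univ := by
  obtain ⟨𝒜, h𝒜m, h𝒜, ℬ, hℬm, hℬ, hsub⟩ :=
    (measurableSet_toMeasurable ν (diagonal _)).exists_pseudoDiagonal_prodMap_subset
      (subset_toMeasurable ν _)
  have hfst : Measurable (Prod.map Prod.fst Prod.fst : (X₁ × X₂) × (X₁ × X₂) → X₁ × X₁) :=
    measurable_fst.prodMap measurable_fst
  have hsnd : Measurable (Prod.map Prod.snd Prod.snd : (X₁ × X₂) × (X₁ × X₂) → X₂ × X₂) :=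
    measurable_snd.prodMap measurable_snd
  set A := Prod.map Prod.fst Prod.fst ⁻¹' pseudoDiagonal 𝒜
  set B := Prod.map Prod.snd Prod.snd ⁻¹' pseudoDiagonal ℬ
  have hA : ν.map (Prod.map Prod.fst Prod.fst) (diagonal X₁) ≤ ν A := by
    rw [← Measure.map_apply hfst (measurableSet_pseudoDiagonal h𝒜 h𝒜m)]
    exact measure_mono (diagonal_subset_pseudoDiagonal 𝒜)
  have hB : ν.map (Prod.map Prod.snd Prod.snd) (diagonal X₂) ≤ ν B := by
    rw [← Measure.map_apply hsnd (measurableSet_pseudoDiagonal hℬ hℬm)]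
    exact measure_mono (diagonal_subset_pseudoDiagonal ℬ)
  calc _ ≤ ν A + ν B := add_le_add hA hB
    _ = ν (A ∪ B) + ν (A ∩ B) :=
      (measure_union_add_inter _ (hsnd (measurableSet_pseudoDiagonal hℬ hℬm))).symm
    _ ≤ ν univ + ν (toMeasurable ν (diagonal _)) :=
      add_le_add (measure_mono (subset_univ _)) (measure_mono hsub)
    _ = ν (diagonal (X₁ × X₂)) + ν univ := by rw [measure_toMeasurable, add_comm]

lemma tendsto_measure_diagonal_prod {ι : Type*} {l : Filter ι}
    {ν : ι → Measure ((X₁ × X₂) × (X₁ × X₂))} [∀ i, IsProbabilityMeasure (ν i)]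
    (h₁ : Tendsto (fun i => (ν i).map (Prod.map Prod.fst Prod.fst) (diagonal X₁)) l (𝓝 1))
    (h₂ : Tendsto (fun i => (ν i).map (Prod.map Prod.snd Prod.snd) (diagonal X₂)) l (𝓝 1)) :
    Tendsto (fun i => ν i (diagonal (X₁ × X₂))) l (𝓝 1) := by
  have hlower : Tendsto (fun i => (ν i).map (Prod.map Prod.fst Prod.fst) (diagonal X₁) +
      (ν i).map (Prod.map Prod.snd Prod.snd) (diagonal X₂) - 1) l (𝓝 1) := by
    simpa using ENNReal.Tendsto.sub (h₁.add h₂) tendsto_const_nhds (.inr ENNReal.one_ne_top)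
  refine tendsto_of_tendsto_of_tendsto_of_le_of_le hlower tendsto_const_nhds (fun i => ?_)
    (fun i => prob_le_one)
  rw [tsub_le_iff_right, ← measure_univ (μ := ν i)]
  exact map_apply_diagonal_add_map_apply_diagonal_le (ν i)

end ProductDiagonal

section TotalVariation

variable {W Y : Type*} [MeasurableSpace W] [MeasurableSpace Y]

noncomputable def tvDist (ρ σ : Measure W) : ℝ≥0∞ :=
  ⨆ s : Set W, (ρ s - σ s) + (σ s - ρ s)

lemma tvDist_comm (ρ σ : Measure W) : tvDist ρ σ = tvDist σ ρ :=
  iSup_congr fun _ => add_comm _ _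

lemma measure_sub_le_tvDist (ρ σ : Measure W) (s : Set W) : ρ s - σ s ≤ tvDist ρ σ :=
  le_iSup_of_le s le_self_add

lemma map_apply_sub_map_apply_le_tvDist (ρ σ : Measure W) {f : W → Y} (hf : Measurable f)
    (s : Set Y) : ρ.map f s - σ.map f s ≤ tvDist ρ σ := by
  set t := toMeasurable (σ.map f) s
  have ht : MeasurableSet t := measurableSet_toMeasurable _ _
  calc ρ.map f s - σ.map f s ≤ ρ.map f t - σ.map f t := by
        rw [measure_toMeasurable]
        exact tsub_le_tsub_right (measure_mono (subset_toMeasurable _ _)) _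
    _ = ρ (f ⁻¹' t) - σ (f ⁻¹' t) := by rw [Measure.map_apply hf ht, Measure.map_apply hf ht]
    _ ≤ tvDist ρ σ := measure_sub_le_tvDist ρ σ _

lemma tvDist_map_le (ρ σ : Measure W) {f : W → Y} (hf : Measurable f) :
    tvDist (ρ.map f) (σ.map f) ≤ tvDist ρ σ := by
  refine iSup_le fun s => ?_
  rcases le_total (ρ.map f s) (σ.map f s) with h | h
  · rw [tsub_eq_zero_of_le h, zero_add, tvDist_comm]
    exact map_apply_sub_map_apply_le_tvDist σ ρ hf s
  · rw [tsub_eq_zero_of_le h, add_zero]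
    exact map_apply_sub_map_apply_le_tvDist ρ σ hf s

end TotalVariation

/-- The hypotheses on the sequence `ν` in `HasRelPropertyT μ act`. -/
structure IsIoanaSequence {Γ X : Type*} [MeasurableSpace X] (μ : Measure X) (act : Γ → X → X)
    (ν : ℕ → Measure (X × X)) : Prop where
  isProbabilityMeasure : ∀ n, IsProbabilityMeasure (ν n)
  map_fst : ∀ n, (ν n).map Prod.fst = μ
  map_snd : ∀ n, (ν n).map Prod.snd = μ
  tendsto_integral : ∀ φ ψ : X → ℝ, Measurable φ → Measurable ψ →
    (∃ C, ∀ x, |φ x| ≤ C) → (∃ C, ∀ x, |ψ x| ≤ C) →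
    Tendsto (fun n => ∫ p : X × X, φ p.1 * ψ p.2 ∂(ν n)) atTop (𝓝 (∫ x, φ x * ψ x ∂μ))
  tendsto_tvDist : ∀ γ, Tendsto (fun n => tvDist ((ν n).map (Prod.map (act γ) (act γ))) (ν n))
    atTop (𝓝 0)

lemma HasRelPropertyT.tendsto_measure_diagonal {Γ X : Type*} [Group Γ] [MeasurableSpace X]
    {μ : Measure X} {act : Γ → X → X} (h : HasRelPropertyT μ act) {ν : ℕ → Measure (X × X)}
    (hν : IsIoanaSequence μ act ν) : Tendsto (fun n => ν n (diagonal X)) atTop (𝓝 1) :=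
  h ν hν.1 hν.2 hν.3 hν.4 hν.5

namespace IsIoanaSequence

variable {Γ Z Y : Type*} [MeasurableSpace Z] [MeasurableSpace Y] {μ : Measure Z}
  {actZ : Γ → Z → Z} {actY : Γ → Y → Y} {ν : ℕ → Measure (Z × Z)} {π : Z → Y}

lemma map_prodMap (hν : IsIoanaSequence μ actZ ν) (hπ : Measurable π)
    (hactZ : ∀ γ, Measurable (actZ γ)) (hactY : ∀ γ, Measurable (actY γ))
    (hequiv : ∀ γ z, π (actZ γ z) = actY γ (π z)) :
    IsIoanaSequence (μ.map π) actY fun n => (ν n).map (Prod.map π π) where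
  isProbabilityMeasure n :=
    have := hν.isProbabilityMeasure n
    Measure.isProbabilityMeasure_map (hπ.prodMap hπ).aemeasurable
  map_fst n := by
    rw [Measure.map_map measurable_fst (hπ.prodMap hπ), Prod.map_fst',
      ← Measure.map_map hπ measurable_fst, hν.map_fst]
  map_snd n := by
    rw [Measure.map_map measurable_snd (hπ.prodMap hπ), Prod.map_snd',
      ← Measure.map_map hπ measurable_snd, hν.map_snd]
  tendsto_integral φ ψ hφ hψ hφb hψb := by
    have hint : ∀ n, ∫ q : Y × Y, φ q.1 * ψ q.2 ∂(ν n).map (Prod.map π π) =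
        ∫ p : Z × Z, φ (π p.1) * ψ (π p.2) ∂ν n := fun n =>
      integral_map (hπ.prodMap hπ).aemeasurable
        ((hφ.comp measurable_fst).mul (hψ.comp measurable_snd)).aestronglyMeasurable
    rw [integral_map (f := fun y => φ y * ψ y) hπ.aemeasurable
      (hφ.mul hψ).aestronglyMeasurable]
    simp only [hint]
    exact hν.tendsto_integral (φ ∘ π) (ψ ∘ π) (hφ.comp hπ) (hψ.comp hπ)
      (hφb.imp fun _ hC z => hC (π z)) (hψb.imp fun _ hC z => hC (π z))
  tendsto_tvDist γ := by
    have hcomm : ∀ n, ((ν n).map (Prod.map π π)).map (Prod.map (actY γ) (actY γ)) =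
        ((ν n).map (Prod.map (actZ γ) (actZ γ))).map (Prod.map π π) := fun n => by
      rw [Measure.map_map ((hactY γ).prodMap (hactY γ)) (hπ.prodMap hπ),
        Measure.map_map (hπ.prodMap hπ) ((hactZ γ).prodMap (hactZ γ))]
      congr 1
      ext p <;> exact (hequiv γ _).symm
    refine tendsto_of_tendsto_of_tendsto_of_le_of_le tendsto_const_nhds (hν.tendsto_tvDist γ)
      (fun n => zero_le) fun n => ?_
    dsimp only
    rw [hcomm]
    exact tvDist_map_le _ _ (hπ.prodMap hπ)

end IsIoanaSequence

theorem relPropertyT_prod_of_factors_general {Γ X₁ X₂ : Type*} [Group Γ]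
    [MeasurableSpace X₁] [MeasurableSpace X₂]
    (μ₁ : Measure X₁) (μ₂ : Measure X₂)
    [IsProbabilityMeasure μ₁] [IsProbabilityMeasure μ₂]
    (act₁ : Γ → X₁ → X₁) (act₂ : Γ → X₂ → X₂)
    (hmp₁ : ∀ γ, MeasurePreserving (act₁ γ) μ₁ μ₁)
    (hmp₂ : ∀ γ, MeasurePreserving (act₂ γ) μ₂ μ₂)
    (h₁ : HasRelPropertyT μ₁ act₁) (h₂ : HasRelPropertyT μ₂ act₂) :
    HasRelPropertyT (μ₁.prod μ₂)
      (fun γ (p : X₁ × X₂) => (act₁ γ p.1, act₂ γ p.2)) := by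
  intro ν hprob hfst hsnd hweak hinv
  have hν : IsIoanaSequence (μ₁.prod μ₂) _ ν := ⟨hprob, hfst, hsnd, hweak, hinv⟩
  have hact : ∀ γ, Measurable fun p : X₁ × X₂ => (act₁ γ p.1, act₂ γ p.2) :=
    fun γ => (hmp₁ γ).measurable.prodMap (hmp₂ γ).measurable
  have hν₁ := hν.map_prodMap measurable_fst hact (fun γ => (hmp₁ γ).measurable) fun _ _ => rfl
  have hν₂ := hν.map_prodMap measurable_snd hact (fun γ => (hmp₂ γ).measurable) fun _ _ => rfl
  rw [measurePreserving_fst.map_eq] at hν₁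
  rw [measurePreserving_snd.map_eq] at hν₂
  exact tendsto_measure_diagonal_prod (h₁.tendsto_measure_diagonal hν₁)
    (h₂.tendsto_measure_diagonal hν₂)

/-- If for `i = 1, 2` the actions of the projections of
`Γ ⊆ Aut(X₁,μ₁) × Aut(X₂,μ₂)` on the factors `(Xᵢ, μᵢ)` have the property (T)
relative to the space, then the diagonal action of `Γ` on the product
probability space `(X₁ × X₂, μ₁ ⊗ μ₂)` has the property (T) relative to the
space. -/
theorem relPropertyT_prod_of_factors {Γ X₁ X₂ : Type*} [Group Γ]
    [MeasurableSpace X₁] [MeasurableSpace X₂]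
    (μ₁ : Measure X₁) (μ₂ : Measure X₂)
    [IsProbabilityMeasure μ₁] [IsProbabilityMeasure μ₂]
    (act₁ : Γ → X₁ → X₁) (act₂ : Γ → X₂ → X₂)
    (hone₁ : ∀ x, act₁ 1 x = x) (hmul₁ : ∀ γ γ' x, act₁ (γ * γ') x = act₁ γ (act₁ γ' x))
    (hone₂ : ∀ x, act₂ 1 x = x) (hmul₂ : ∀ γ γ' x, act₂ (γ * γ') x = act₂ γ (act₂ γ' x))
    (hmp₁ : ∀ γ, MeasurePreserving (act₁ γ) μ₁ μ₁)
    (hmp₂ : ∀ γ, MeasurePreserving (act₂ γ) μ₂ μ₂)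
    (h₁ : HasRelPropertyT μ₁ act₁) (h₂ : HasRelPropertyT μ₂ act₂) :
    HasRelPropertyT (μ₁.prod μ₂)
      (fun γ (p : X₁ × X₂) => (act₁ γ p.1, act₂ γ p.2)) :=
  relPropertyT_prod_of_factors_general μ₁ μ₂ act₁ act₂ hmp₁ hmp₂ h₁ h₂
end

section
/- For any countable group Γ acting by measure-preserving transformations on an atomless standard probability space (X, μ), the diagonal action of Γ on the infinite product (∏_{i=1}^∞ X, μ^⊗ℕ) does not have the property (T) relative to the space. -/
/-!
Let `ηₙ` be the coupling of `μ^ℕ` with itself that copies the coordinates `< n` and draws the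
others independently. Both marginals of `ηₙ` are `μ^ℕ`, and `ηₙ` is exactly invariant under the
diagonal action, which commutes with copying coordinates. It converges weakly to the diagonal
measure: by Lévy's upward theorem a test function `ψ` is `L¹`-close to its conditional expectation
`ψₖ` given the first `k` coordinates, and for `n > k` the two sides of `ηₙ` agree on `ψₖ`. Yet
coordinate `n` is independent under `ηₙ`, so the diagonal is `ηₙ`-null because `μ` is atomless.
-/

open MeasureTheory Filter Topology Set

lemma abs_integral_coupling_sub_le {α : Type*} [MeasurableSpace α] {η : Measure α}
    {ν : Measure (α × α)} (h₁ : ν.map Prod.fst = η) (h₂ : ν.map Prod.snd = η)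
    {φ ψ ψ' : α → ℝ} {C : ℝ} (hφ : Measurable φ) (hφC : ∀ x, |φ x| ≤ C)
    (hψ : Integrable ψ η) (hψ' : Integrable ψ' η) (hψ'ν : ∀ᵐ p ∂ν, ψ' p.2 = ψ' p.1) :
    |∫ p, φ p.1 * ψ p.2 ∂ν - ∫ x, φ x * ψ x ∂η| ≤ 2 * C * ∫ x, |ψ x - ψ' x| ∂η := by
  have int₁ : ∀ {g : α → ℝ}, Integrable g η → Integrable (fun p => g p.1) ν := fun hg =>
    (h₁ ▸ hg).comp_measurable measurable_fst
  have int₂ : ∀ {g : α → ℝ}, Integrable g η → Integrable (fun p => g p.2) ν := fun hg =>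
    (h₂ ▸ hg).comp_measurable measurable_snd
  have integral₁ : ∀ {g : α → ℝ}, Integrable g η → ∫ p, g p.1 ∂ν = ∫ x, g x ∂η := fun hg => by
    rw [← h₁, integral_map measurable_fst.aemeasurable (h₁ ▸ hg.1)]
  have integral₂ : ∀ {g : α → ℝ}, Integrable g η → ∫ p, g p.2 ∂ν = ∫ x, g x ∂η := fun hg => by
    rw [← h₂, integral_map measurable_snd.aemeasurable (h₂ ▸ hg.1)]
  have hφν : ∀ᵐ p ∂ν, ‖φ p.1‖ ≤ C := ae_of_all _ fun p => hφC p.1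
  have hφ₁ : AEStronglyMeasurable (fun p : α × α => φ p.1) ν :=
    (hφ.comp measurable_fst).aestronglyMeasurable
  have hdiff : Integrable (fun x => |ψ x - ψ' x|) η := (hψ.sub hψ').abs
  rw [← integral₁ (hψ.bdd_mul hφ.aestronglyMeasurable (ae_of_all _ hφC)),
    ← integral_sub ((int₂ hψ).bdd_mul hφ₁ hφν) ((int₁ hψ).bdd_mul hφ₁ hφν)]
  calc |∫ p, φ p.1 * ψ p.2 - φ p.1 * ψ p.1 ∂ν|
      ≤ ∫ p, C * (|ψ p.2 - ψ' p.2| + |ψ p.1 - ψ' p.1|) ∂ν := by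
        rw [← Real.norm_eq_abs]
        refine norm_integral_le_of_norm_le (((int₂ hdiff).add (int₁ hdiff)).const_mul C) ?_
        filter_upwards [hψ'ν] with p hp
        rw [Real.norm_eq_abs, ← mul_sub, abs_mul]
        refine mul_le_mul (hφC p.1) ?_ (abs_nonneg _) ((abs_nonneg _).trans (hφC p.1))
        calc |ψ p.2 - ψ p.1| = |(ψ p.2 - ψ' p.2) - (ψ p.1 - ψ' p.1)| := by rw [hp]; ring_nf
          _ ≤ _ := abs_sub _ _
    _ = 2 * C * ∫ x, |ψ x - ψ' x| ∂η := by
        rw [integral_const_mul, integral_add (int₂ hdiff) (int₁ hdiff), integral₁ hdiff,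
          integral₂ hdiff]
        ring

lemma MeasureTheory.Measure.prod_diagonal_eq_zero {α : Type*} [MeasurableSpace α] [MeasurableEq α]
    {μ ν : Measure α} [SFinite ν] [NullSingletonClass ν] : (μ.prod ν) (diagonal α) = 0 := by
  rw [Measure.prod_apply measurableSet_diagonal]
  simp [preimage, diagonal]

section SpliceCoupling

variable {ι : Type*} {X : ι → Type*} [∀ i, MeasurableSpace (X i)]

lemma measurable_piecewise_prod (s : Set ι) [DecidablePred (· ∈ s)] :
    Measurable fun p : (Π i, X i) × (Π i, X i) => s.piecewise p.1 p.2 := by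
  refine measurable_pi_lambda _ fun i => ?_
  by_cases hi : i ∈ s <;> simp only [Set.piecewise, hi, if_true, if_false] <;> fun_prop

variable (μ : (i : ι) → Measure (X i)) (s : Set ι) [DecidablePred (· ∈ s)]

noncomputable def spliceCoupling : Measure ((Π i, X i) × (Π i, X i)) :=
  ((Measure.infinitePi μ).prod (Measure.infinitePi μ)).map fun p => (p.1, s.piecewise p.1 p.2)

lemma measurable_fst_prodMk_piecewise :
    Measurable fun p : (Π i, X i) × (Π i, X i) => (p.1, s.piecewise p.1 p.2) :=
  measurable_fst.prodMk (measurable_piecewise_prod s)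

lemma ae_spliceCoupling_eq_of_dependsOn {β : Type*} [MeasurableSpace β] [MeasurableEq β]
    {f : (Π i, X i) → β} (hf : Measurable f) {t : Set ι} (hft : DependsOn f t) (hts : t ⊆ s) :
    ∀ᵐ p ∂spliceCoupling μ s, f p.2 = f p.1 := by
  rw [spliceCoupling, ae_map_iff (measurable_fst_prodMk_piecewise s).aemeasurable
    (measurableSet_eq_fun (f := fun p : (Π i, X i) × (Π i, X i) => f p.2)
      (g := fun p => f p.1) (hf.comp measurable_snd) (hf.comp measurable_fst))]
  exact ae_of_all _ fun p => hft fun i hi => by simp [Set.piecewise, hts hi]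

variable [∀ i, IsProbabilityMeasure (μ i)]

theorem MeasureTheory.Measure.infinitePi_prod_map_piecewise :
    ((Measure.infinitePi μ).prod (Measure.infinitePi μ)).map (fun p => s.piecewise p.1 p.2)
      = Measure.infinitePi μ := by
  refine Measure.eq_infinitePi _ fun I t ht => ?_
  rw [Measure.map_apply (measurable_piecewise_prod s) (.pi I.countable_toSet fun i _ => ht i)]
  have : (fun p : (Π i, X i) × (Π i, X i) => s.piecewise p.1 p.2) ⁻¹' (I : Set ι).pi t
      = (↑(I.filter (· ∈ s)) : Set ι).pi t ×ˢ (↑(I.filter (· ∉ s)) : Set ι).pi t := by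
    ext p
    simp only [mem_preimage, Set.mem_pi, Finset.coe_filter, mem_prod]
    refine ⟨fun h => ⟨fun i hi => ?_, fun i hi => ?_⟩, fun h i hi => ?_⟩
    · simpa [Set.piecewise, hi.2] using h i hi.1
    · simpa [Set.piecewise, hi.2] using h i hi.1
    · by_cases his : i ∈ s
      · simpa [Set.piecewise, his] using h.1 i ⟨hi, his⟩
      · simpa [Set.piecewise, his] using h.2 i ⟨hi, his⟩
  rw [this, Measure.prod_prod, Measure.infinitePi_pi _ fun i _ => ht i,
    Measure.infinitePi_pi _ fun i _ => ht i, Finset.prod_filter_mul_prod_filter_not]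

instance : IsProbabilityMeasure (spliceCoupling μ s) :=
  Measure.isProbabilityMeasure_map (measurable_fst_prodMk_piecewise s).aemeasurable

lemma spliceCoupling_map_fst : (spliceCoupling μ s).map Prod.fst = Measure.infinitePi μ := by
  rw [spliceCoupling, Measure.map_map measurable_fst (measurable_fst_prodMk_piecewise s)]
  exact Measure.map_fst_prod.trans (by simp)

lemma spliceCoupling_map_snd : (spliceCoupling μ s).map Prod.snd = Measure.infinitePi μ := by
  rw [spliceCoupling, Measure.map_map measurable_snd (measurable_fst_prodMk_piecewise s)]
  exact Measure.infinitePi_prod_map_piecewise μ s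

lemma spliceCoupling_map_prodMap_of_measurePreserving {f : (i : ι) → X i → X i}
    (hf : ∀ i, MeasurePreserving (f i) (μ i) (μ i)) :
    (spliceCoupling μ s).map (Prod.map (fun x i => f i (x i)) (fun x i => f i (x i)))
      = spliceCoupling μ s := by
  have hF : Measurable fun (x : Π i, X i) i => f i (x i) :=
    measurable_pi_lambda _ fun i => (hf i).measurable.comp (measurable_pi_apply i)
  have hπ : (Measure.infinitePi μ).map (fun x i => f i (x i)) = Measure.infinitePi μ := by
    rw [Measure.infinitePi_map_pi _ fun i => (hf i).measurable]
    simp only [(hf _).map_eq]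
  have hcomm : Prod.map (fun (x : Π i, X i) i => f i (x i)) (fun x i => f i (x i)) ∘
        (fun p : (Π i, X i) × (Π i, X i) => (p.1, s.piecewise p.1 p.2))
      = (fun p => (p.1, s.piecewise p.1 p.2)) ∘
        Prod.map (fun x i => f i (x i)) (fun x i => f i (x i)) := by
    ext p i
    · rfl
    · by_cases hi : i ∈ s <;> simp [Set.piecewise, hi]
  rw [spliceCoupling, Measure.map_map (hF.prodMap hF) (measurable_fst_prodMk_piecewise s), hcomm,
    ← Measure.map_map (measurable_fst_prodMk_piecewise s) (hF.prodMap hF),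
    ← Measure.map_prod_map _ _ hF hF, hπ]

lemma spliceCoupling_diagonal_eq_zero {i : ι} (hi : i ∉ s) [MeasurableEq (X i)]
    [NullSingletonClass (μ i)] : spliceCoupling μ s {p | p.1 = p.2} = 0 := by
  set evalᵢ : (Π i, X i) × (Π i, X i) → X i × X i := fun p => (p.1 i, p.2 i)
  have hevalᵢ : Measurable evalᵢ := by fun_prop
  have hpre : (fun p : (Π i, X i) × (Π i, X i) => (p.1, s.piecewise p.1 p.2)) ⁻¹'
      (evalᵢ ⁻¹' diagonal (X i)) = evalᵢ ⁻¹' diagonal (X i) := by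
    ext p
    simp [evalᵢ, Set.piecewise, hi]
  refine measure_mono_null (t := evalᵢ ⁻¹' diagonal (X i)) (fun p hp => congrFun hp i) ?_
  rw [spliceCoupling, Measure.map_apply (measurable_fst_prodMk_piecewise s)
    (hevalᵢ measurableSet_diagonal), hpre, ← Measure.map_apply hevalᵢ measurableSet_diagonal]
  change ((Measure.infinitePi μ).prod (Measure.infinitePi μ)).map
    (Prod.map (fun x => x i) (fun x => x i)) _ = 0
  rw [← Measure.map_prod_map _ _ (measurable_pi_apply i) (measurable_pi_apply i),
    Measure.infinitePi_map_eval]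
  exact Measure.prod_diagonal_eq_zero

end SpliceCoupling

lemma MeasureTheory.Filtration.iSup_piLE {ι : Type*} [Preorder ι] {X : ι → Type*}
    [∀ i, MeasurableSpace (X i)] :
    ⨆ i, Filtration.piLE (X := X) i = MeasurableSpace.pi := by
  refine le_antisymm (iSup_le Filtration.piLE.le) (iSup_mono fun i => ?_)
  change _ ≤ MeasurableSpace.comap (Preorder.restrictLe i) MeasurableSpace.pi
  rw [show (fun x : Π i, X i => x i) = (fun y => y ⟨i, le_rfl⟩) ∘ Preorder.restrictLe i from rfl,
    ← MeasurableSpace.comap_comp]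
  exact MeasurableSpace.comap_mono (measurable_pi_apply (⟨i, le_rfl⟩ : Iic i)).comap_le

lemma tendsto_integral_abs_sub_condExp_piLE {X : ℕ → Type*} [∀ i, MeasurableSpace (X i)]
    {π : Measure (Π i, X i)} [IsFiniteMeasure π] {ψ : (Π i, X i) → ℝ} (hψ : Integrable ψ π) :
    Tendsto (fun k => ∫ x, |ψ x - π[ψ | Filtration.piLE k] x| ∂π) atTop (𝓝 0) := by
  have hlim : π[ψ | ⨆ k, Filtration.piLE k] =ᵐ[π] ψ := by
    rw [Filtration.iSup_piLE]
    exact condExp_of_aestronglyMeasurable' le_rfl hψ.1 hψ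
  have hL1 : ∀ k, ∫ x, |ψ x - π[ψ | Filtration.piLE k] x| ∂π
      = (eLpNorm (π[ψ | Filtration.piLE k] - π[ψ | ⨆ k, Filtration.piLE k]) 1 π).toReal := by
    intro k
    rw [eLpNorm_congr_ae ((EventuallyEq.refl _ _).sub hlim), eLpNorm_one_eq_lintegral_enorm,
      ← integral_norm_eq_lintegral_enorm (integrable_condExp.sub hψ).1]
    simp [Real.norm_eq_abs, abs_sub_comm]
  simp_rw [hL1]
  simpa [Function.comp_def] using
    (ENNReal.tendsto_toReal ENNReal.zero_ne_top).comp (tendsto_eLpNorm_condExp ψ)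

theorem tendsto_integral_spliceCoupling_Iio {X : ℕ → Type*} [∀ i, MeasurableSpace (X i)]
    (μ : (i : ℕ) → Measure (X i)) [∀ i, IsProbabilityMeasure (μ i)]
    {φ ψ : (Π i, X i) → ℝ} (hφ : Measurable φ) (hφb : ∃ C, ∀ x, |φ x| ≤ C)
    (hψ : Integrable ψ (Measure.infinitePi μ)) :
    Tendsto (fun n => ∫ p, φ p.1 * ψ p.2 ∂spliceCoupling μ (Iio n)) atTop
      (𝓝 (∫ x, φ x * ψ x ∂Measure.infinitePi μ)) := by
  obtain ⟨C, hC⟩ := hφb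
  rw [Metric.tendsto_atTop]
  intro ε hε
  obtain ⟨k, hk⟩ := (((tendsto_integral_abs_sub_condExp_piLE hψ).const_mul (2 * C)).eventually
    (gt_mem_nhds (by simpa using hε))).exists
  refine ⟨k + 1, fun n hn => (abs_integral_coupling_sub_le (spliceCoupling_map_fst μ _)
    (spliceCoupling_map_snd μ _) hφ hC hψ integrable_condExp ?_).trans_lt hk⟩
  exact ae_spliceCoupling_eq_of_dependsOn μ _
    (stronglyMeasurable_condExp.mono (Filtration.piLE.le k)).measurable
    stronglyMeasurable_condExp.dependsOn_of_piLE (Iic_subset_Iio.2 (by omega))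

theorem not_relPropertyT_infinite_product_general {Γ X : Type*} [Group Γ]
    [MeasurableSpace X] [StandardBorelSpace X]
    (μ : Measure X) [IsProbabilityMeasure μ] [NullSingletonClass μ]
    (act : Γ → X → X)
    (hmp : ∀ γ, MeasurePreserving (act γ) μ μ)
    (η : Measure (ℕ → X))
    (hη : ∀ s : Finset ℕ,
      η.map (fun f (i : s) => f (i : ℕ)) = Measure.pi (fun _ : s => μ)) :
    ¬ HasRelPropertyT η (fun γ (f : ℕ → X) (i : ℕ) => act γ (f i)) := by
  obtain rfl : η = Measure.infinitePi fun _ => μ :=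
    IsProjectiveLimit.unique hη (Measure.isProjectiveLimit_infinitePi _)
  intro hT
  have hdiag := hT (fun n => spliceCoupling (fun _ => μ) (Iio (n : ℕ))) (fun _ => inferInstance)
    (fun _ => spliceCoupling_map_fst _ _) (fun _ => spliceCoupling_map_snd _ _)
    (fun φ ψ hφ hψ hφb ⟨C, hC⟩ => tendsto_integral_spliceCoupling_Iio _ hφ hφb
      (.of_bound hψ.aestronglyMeasurable C (ae_of_all _ hC)))
    (fun γ => by simp [spliceCoupling_map_prodMap_of_measurePreserving _ _ fun _ => hmp γ])
  have hzero : ∀ n : ℕ, spliceCoupling (fun _ => μ) (Iio n) {p | p.1 = p.2} = 0 := fun n =>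
    spliceCoupling_diagonal_eq_zero _ _ (lt_irrefl n)
  simp only [hzero] at hdiag
  exact zero_ne_one (tendsto_nhds_unique tendsto_const_nhds hdiag)

/-- The diagonal action of a countable group `Γ` on the infinite product
`(∏_{i ∈ ℕ} X, μ^{⊗ℕ})` of an atomless standard probability space `(X, μ)`
(the product measure `η` being characterized by its finite-dimensional
marginals) never has the property (T) relative to the space. -/
theorem not_relPropertyT_infinite_product {Γ X : Type*} [Group Γ] [Countable Γ]
    [MeasurableSpace X] [StandardBorelSpace X]
    (μ : Measure X) [IsProbabilityMeasure μ] [NullSingletonClass μ]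
    (act : Γ → X → X)
    (hone : ∀ x, act 1 x = x) (hmul : ∀ γ γ' x, act (γ * γ') x = act γ (act γ' x))
    (hmp : ∀ γ, MeasurePreserving (act γ) μ μ)
    (η : Measure (ℕ → X)) [IsProbabilityMeasure η]
    (hη : ∀ s : Finset ℕ,
      η.map (fun f (i : s) => f (i : ℕ)) = Measure.pi (fun _ : s => μ)) :
    ¬ HasRelPropertyT η (fun γ (f : ℕ → X) (i : ℕ) => act γ (f i)) :=
  not_relPropertyT_infinite_product_general μ act hmp η hη
end
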